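/- arXiv:2509.01646 — 2 statements merged into one kernel-verified Lean document; each statement's English description precedes it below -/
import Mathlib

section
/- Let R be a commutative ring, S a multiplicative subset of R, and E, M be R-modules. Then the following are equivalent: (1) E is u-S-injective relative to M; (2) for every R-module monomorphism f : K → M, the induced map f^* : Hom_R(M,E) → Hom_R(K,E) is a u-S-epimorphism; (3) for every submodule K of M, the map (i_K)^* : Hom_R(M,E) → Hom_R(K,E) induced by the inclusion i_K : K → M is a u-S-epimorphism. -/
universe u v w

variable (R : Type u) [CommRing R]

/-- An `R`-module `T` is uniformly `S`-torsion if there is `s ∈ S` with `s • T = 0`. -/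
def IsUSTorsion (S : Submonoid R) (T : Type*) [AddCommGroup T] [Module R T] : Prop :=
  ∃ s ∈ S, ∀ t : T, s • t = 0

/-- `f` is a `u`-`S`-epimorphism if its cokernel is uniformly `S`-torsion. -/
def IsUSEpi (S : Submonoid R) {M N : Type*} [AddCommGroup M] [Module R M]
    [AddCommGroup N] [Module R N] (f : M →ₗ[R] N) : Prop :=
  IsUSTorsion R S (N ⧸ LinearMap.range f)

/-- `f` is a `u`-`S`-monomorphism if its kernel is uniformly `S`-torsion. -/
def IsUSMono (S : Submonoid R) {M N : Type*} [AddCommGroup M] [Module R M]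
    [AddCommGroup N] [Module R N] (f : M →ₗ[R] N) : Prop :=
  IsUSTorsion R S (LinearMap.ker f)

/-- `P` is `u`-`S`-projective relative to `M` if for every `u`-`S`-epimorphism
`f : M → N`, the induced map `Hom(P,M) → Hom(P,N)` is a `u`-`S`-epimorphism. -/
def IsUSProjRel (S : Submonoid R) (P : Type w) [AddCommGroup P] [Module R P]
    (M : Type v) [AddCommGroup M] [Module R M] : Prop :=
  ∀ (N : Type v) [AddCommGroup N] [Module R N] (f : M →ₗ[R] N),
    IsUSEpi R S f → IsUSEpi R S (LinearMap.llcomp (σ₁₂ := RingHom.id R) (σ₁₃ := RingHom.id R) R P M N f)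

/-- `E` is `u`-`S`-injective relative to `M` if for every `u`-`S`-monomorphism
`f : K → M`, the induced map `Hom(M,E) → Hom(K,E)` is a `u`-`S`-epimorphism. -/
def IsUSInjRel (S : Submonoid R) (E : Type w) [AddCommGroup E] [Module R E]
    (M : Type v) [AddCommGroup M] [Module R M] : Prop :=
  ∀ (K : Type v) [AddCommGroup K] [Module R K] (f : K →ₗ[R] M),
    IsUSMono R S f → IsUSEpi R S (LinearMap.lcomp R E f)



lemma isUSEpi_iff (S : Submonoid R) {M N : Type*} [AddCommGroup M] [Module R M]
    [AddCommGroup N] [Module R N] (f : M →ₗ[R] N) :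
    IsUSEpi R S f ↔ ∃ s ∈ S, ∀ n : N, ∃ m : M, f m = s • n := by
  constructor
  · rintro ⟨s, hs, h⟩
    refine ⟨s, hs, fun n => ?_⟩
    have := h (Submodule.Quotient.mk n)
    rw [← Submodule.Quotient.mk_smul, Submodule.Quotient.mk_eq_zero] at this
    exact this
  · rintro ⟨s, hs, h⟩
    refine ⟨s, hs, fun t => ?_⟩
    obtain ⟨n, rfl⟩ := Submodule.Quotient.mk_surjective _ t
    rw [← Submodule.Quotient.mk_smul, Submodule.Quotient.mk_eq_zero]
    exact h n


theorem stmt1 (S : Submonoid R) (hS : (0 : R) ∉ S)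
    (M : Type v) [AddCommGroup M] [Module R M]
    (E : Type w) [AddCommGroup E] [Module R E] :
    List.TFAE
      [ IsUSInjRel R S E M,
        ∀ (K : Type v) [AddCommGroup K] [Module R K] (f : K →ₗ[R] M),
          Function.Injective f → IsUSEpi R S (LinearMap.lcomp R E f),
        ∀ K : Submodule R M,
          IsUSEpi R S (LinearMap.lcomp R E K.subtype) ] := by

  tfae_have 1 → 2
  · intro h K _ _ f hf
    refine h K f ⟨1, S.one_mem, fun t => ?_⟩
    rw [one_smul]
    have ht : f t.1 = f 0 := by simpa using t.2
    exact Subtype.ext (hf ht)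
  tfae_have 2 → 3
  · intro h K
    exact h K K.subtype K.injective_subtype
  tfae_have 3 → 1
  · intro h K _ _ f hf
    obtain ⟨s, hs, hker⟩ := hf
    rw [isUSEpi_iff]
    obtain ⟨t, ht, hext⟩ := (isUSEpi_iff R S _).mp (h (LinearMap.range f))
    refine ⟨t * s, mul_mem ht hs, fun g => ?_⟩
    have hle : LinearMap.ker f ≤ LinearMap.ker (s • g) := by
      intro k hk
      have h0 : s • k = 0 := by
        have := hker ⟨k, hk⟩
        simpa [Subtype.ext_iff] using this
      simp [LinearMap.mem_ker, ← map_smul, h0]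
    set gh : ↥(LinearMap.range f) →ₗ[R] E :=
      ((LinearMap.ker f).liftQ (s • g) hle).comp
        (f.quotKerEquivRange.symm : ↥(LinearMap.range f) →ₗ[R] K ⧸ LinearMap.ker f)
      with hgh
    obtain ⟨h', hh'⟩ := hext gh
    refine ⟨h', ?_⟩
    ext k
    have h1 : h' (f k) = t • gh (f.rangeRestrict k) := by
      have := congrArg (fun φ => φ (f.rangeRestrict k)) hh'
      simpa using this
    have h2 : gh (f.rangeRestrict k) = s • g k := by
      rw [hgh]
      have : f.quotKerEquivRange.symm (f.rangeRestrict k)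
          = Submodule.Quotient.mk k := by
        rw [LinearEquiv.symm_apply_eq]
        exact Subtype.ext (by simp)
      simp [this]
    simp only [LinearMap.lcomp_apply, LinearMap.smul_apply, h1, h2, smul_smul, mul_comm]
  tfae_finish
end

section
/- Let R be a commutative ring, S a multiplicative subset of R, M an R-module, and f : A → B a u-S-isomorphism of R-modules. Then M is u-S-projective relative to A if and only if M is u-S-projective relative to B; and M is u-S-injective relative to A if and only if M is u-S-injective relative to B. -/
universe u v w

variable (R : Type u) [CommRing R]

lemma epi_of_range_le {S : Submonoid R} {X : Type*} {Y : Type*} {N : Type*}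
    [AddCommGroup X] [Module R X] [AddCommGroup Y] [Module R Y]
    [AddCommGroup N] [Module R N] {p : X →ₗ[R] N} {q : Y →ₗ[R] N}
    (h : LinearMap.range p ≤ LinearMap.range q) (hp : IsUSEpi R S p) :
    IsUSEpi R S q := by
  obtain ⟨s, hs, ht⟩ := hp
  refine ⟨s, hs, fun t => ?_⟩
  obtain ⟨n, rfl⟩ := Submodule.Quotient.mk_surjective _ t
  have h1 := ht (Submodule.Quotient.mk n)
  rw [← Submodule.Quotient.mk_smul, Submodule.Quotient.mk_eq_zero] at h1 ⊢
  exact h h1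

lemma epi_comp {S : Submonoid R} {X : Type*} {Y : Type*} {N : Type*}
    [AddCommGroup X] [Module R X] [AddCommGroup Y] [Module R Y]
    [AddCommGroup N] [Module R N] {g : X →ₗ[R] Y} {h : Y →ₗ[R] N}
    (hg : IsUSEpi R S g) (hh : IsUSEpi R S h) : IsUSEpi R S (h ∘ₗ g) := by
  obtain ⟨s, hs, hts⟩ := hg
  obtain ⟨t, ht, htt⟩ := hh
  refine ⟨t * s, S.mul_mem ht hs, fun z => ?_⟩
  obtain ⟨n, rfl⟩ := Submodule.Quotient.mk_surjective _ z
  rw [← Submodule.Quotient.mk_smul, Submodule.Quotient.mk_eq_zero]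
  have h1 := htt (Submodule.Quotient.mk n)
  rw [← Submodule.Quotient.mk_smul, Submodule.Quotient.mk_eq_zero] at h1
  obtain ⟨y, hy⟩ := h1
  have h2 := hts (Submodule.Quotient.mk y)
  rw [← Submodule.Quotient.mk_smul, Submodule.Quotient.mk_eq_zero] at h2
  obtain ⟨x, hx⟩ := h2
  refine ⟨x, ?_⟩
  have : h (g x) = h (s • y) := by rw [hx]
  rw [LinearMap.comp_apply, this, map_smul, hy, mul_comm, mul_smul]

lemma mono_comp {S : Submonoid R} {X : Type*} {Y : Type*} {N : Type*}
    [AddCommGroup X] [Module R X] [AddCommGroup Y] [Module R Y]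
    [AddCommGroup N] [Module R N] {g : X →ₗ[R] Y} {h : Y →ₗ[R] N}
    (hg : IsUSMono R S g) (hh : IsUSMono R S h) : IsUSMono R S (h ∘ₗ g) := by
  obtain ⟨s, hs, hts⟩ := hg
  obtain ⟨t, ht, htt⟩ := hh
  refine ⟨s * t, S.mul_mem hs ht, fun z => ?_⟩
  obtain ⟨x, hx⟩ := z
  have h1 : g x ∈ LinearMap.ker h := hx
  have h2 := htt ⟨g x, h1⟩
  rw [Subtype.ext_iff] at h2
  have h3 : t • x ∈ LinearMap.ker g := by
    simp only [LinearMap.mem_ker, map_smul]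
    exact h2
  have h4 := hts ⟨t • x, h3⟩
  rw [Subtype.ext_iff] at h4
  rw [Subtype.ext_iff]
  simpa [mul_smul] using h4

/-- A u-S-isomorphism admits a quasi-inverse. -/
lemma exists_quasi_inverse {S : Submonoid R} {A : Type*} {B : Type*}
    [AddCommGroup A] [Module R A] [AddCommGroup B] [Module R B]
    (f : A →ₗ[R] B) (hfm : IsUSMono R S f) (hfe : IsUSEpi R S f) :
    ∃ s ∈ S, ∃ g : B →ₗ[R] A, (∀ a, g (f a) = s • a) ∧ (∀ b, f (g b) = s • b) := by
  obtain ⟨s₁, hs₁, ht₁⟩ := hfm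
  obtain ⟨s₂, hs₂, ht₂⟩ := hfe
  have hmem : ∀ b : B, s₂ • b ∈ LinearMap.range f := fun b => by
    have := ht₂ (Submodule.Quotient.mk b)
    rwa [← Submodule.Quotient.mk_smul, Submodule.Quotient.mk_eq_zero] at this
  let c : B →ₗ[R] LinearMap.range f :=
    LinearMap.codRestrict _ (s₂ • (LinearMap.id : B →ₗ[R] B)) (fun b => hmem b)
  let e : (LinearMap.range f) ≃ₗ[R] (A ⧸ LinearMap.ker f) :=
    (LinearMap.quotKerEquivRange f).symm
  have hker : LinearMap.ker f ≤ LinearMap.ker (s₁ • (LinearMap.id : A →ₗ[R] A)) := by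
    intro a ha
    have := ht₁ ⟨a, ha⟩
    rw [Subtype.ext_iff] at this
    simpa using this
  let ℓ : (A ⧸ LinearMap.ker f) →ₗ[R] A :=
    Submodule.liftQ _ (s₁ • (LinearMap.id : A →ₗ[R] A)) hker
  have key : ∀ (b : B) (a : A), f a = s₂ • b →
      (ℓ ∘ₗ (e : LinearMap.range f →ₗ[R] A ⧸ LinearMap.ker f) ∘ₗ c) b = s₁ • a := by
    intro b a ha
    have hc : c b = ⟨f a, LinearMap.mem_range_self f a⟩ := by
      apply Subtype.ext
      simpa [c] using ha.symm
    have he : e ⟨f a, LinearMap.mem_range_self f a⟩ = Submodule.Quotient.mk a := by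
      rw [LinearEquiv.symm_apply_eq]
      apply Subtype.ext
      simp [LinearMap.quotKerEquivRange]
    simp only [LinearMap.comp_apply, LinearEquiv.coe_coe, hc, he]
    simp [ℓ]
  refine ⟨s₁ * s₂, S.mul_mem hs₁ hs₂,
    ℓ ∘ₗ (e : LinearMap.range f →ₗ[R] A ⧸ LinearMap.ker f) ∘ₗ c, ?_, ?_⟩
  · intro a
    have := key (f a) (s₂ • a) (by rw [map_smul])
    rw [this, mul_smul, smul_comm]
  · intro b
    obtain ⟨a, ha⟩ := hmem b
    have := key b a ha
    rw [this, map_smul, ha, mul_smul, smul_comm]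

theorem stmt6 (S : Submonoid R) (hS : (0 : R) ∉ S)
    (M : Type w) [AddCommGroup M] [Module R M]
    (A : Type v) [AddCommGroup A] [Module R A]
    (B : Type v) [AddCommGroup B] [Module R B]
    (f : A →ₗ[R] B) (hfm : IsUSMono R S f) (hfe : IsUSEpi R S f) :
    (IsUSProjRel R S M A ↔ IsUSProjRel R S M B) ∧
    (IsUSInjRel R S M A ↔ IsUSInjRel R S M B) := by
  obtain ⟨s, hs, g, hgf, hfg⟩ := exists_quasi_inverse R f hfm hfe
  have hge : IsUSEpi R S g := by
    refine ⟨s, hs, fun t => ?_⟩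
    obtain ⟨a, rfl⟩ := Submodule.Quotient.mk_surjective _ t
    rw [← Submodule.Quotient.mk_smul, Submodule.Quotient.mk_eq_zero]
    exact ⟨f a, hgf a⟩
  have hgm : IsUSMono R S g := by
    refine ⟨s, hs, fun t => ?_⟩
    obtain ⟨b, hb⟩ := t
    rw [Subtype.ext_iff]
    show s • b = 0
    rw [← hfg b, show g b = 0 from hb, map_zero]
  constructor
  · constructor
    · intro hA N _ _ q hq
      have h1 := hA N (q ∘ₗ f) (epi_comp R hfe hq)
      refine epi_of_range_le R ?_ h1
      rintro φ ⟨ψ, rfl⟩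
      exact ⟨f ∘ₗ ψ, by ext m; simp⟩
    · intro hB N _ _ q hq
      have h1 := hB N (q ∘ₗ g) (epi_comp R hge hq)
      refine epi_of_range_le R ?_ h1
      rintro φ ⟨ψ, rfl⟩
      exact ⟨g ∘ₗ ψ, by ext m; simp⟩
  · constructor
    · intro hA K _ _ k hk
      have h1 := hA K (g ∘ₗ k) (mono_comp R hk hgm)
      refine epi_of_range_le R ?_ h1
      rintro φ ⟨ψ, rfl⟩
      exact ⟨ψ ∘ₗ g, by ext m; simp⟩
    · intro hB K _ _ k hk
      have h1 := hB K (f ∘ₗ k) (mono_comp R hk hfm)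
      refine epi_of_range_le R ?_ h1
      rintro φ ⟨ψ, rfl⟩
      exact ⟨ψ ∘ₗ f, by ext m; simp⟩
end
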